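/- Let (Ω, ℱ, P) be a probability space, let Y₀, Y₁ : Ω → ℝ be integrable random variables (the potential outcomes), let K be a finite nonempty type, let S : Ω → K be measurable (the site indicator), let Z : Ω → ℝ be measurable taking only the values 0 and 1 (the treatment indicator), and define the observed outcome Y = Z·Y₁ + (1 − Z)·Y₀. Let B ∈ ℱ be an event (representing {X = x}) and fix k ∈ K, with P(B ∩ {S = k} ∩ {Z = 1}) > 0 and P(B ∩ {S = k} ∩ {Z = 0}) > 0. Suppose: (i) under P(·|B ∩ {S = k}), the pair (Y₀, Y₁) is independent of Z (unconfoundedness within site k), and (ii) under P(·|B), the pair (Y₀, Y₁) is independent of S (transportability). Then E_{P(·|B ∩ {S=k} ∩ {Z=1})}[Y] − E_{P(·|B ∩ {S=k} ∩ {Z=0})}[Y] = E_{P(·|B)}[Y₁ − Y₀]. -/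

import Mathlib

/-!
Conditioning on an event determined by a variable independent of `(Y₀, Y₁)` does not change the
law of `(Y₀, Y₁)`. Within site `k` and covariate cell `B`, the treated arm sees `Y = Y₁` and the
control arm `Y = Y₀`, so by unconfoundedness the observed contrast is `E[Y₁ − Y₀ | B, S = k]`, and
by transportability this equals `E[Y₁ − Y₀ | B]`.
-/

open MeasureTheory ProbabilityTheory

section

variable {Ω α β : Type*} {mΩ : MeasurableSpace Ω} {mα : MeasurableSpace α}
  {mβ : MeasurableSpace β} {μ : Measure Ω}

theorem MeasureTheory.Integrable.cond {E : Type*} [NormedAddCommGroup E] {f : Ω → E}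
    (hf : Integrable f μ) (s : Set Ω) : Integrable f μ[|s] := by
  by_cases hs : μ s = 0
  · simp [cond_eq_zero_of_meas_eq_zero hs]
  · exact hf.restrict.smul_measure (ENNReal.inv_ne_top.2 hs)

theorem ProbabilityTheory.IndepFun.identDistrib_cond_preimage [IsFiniteMeasure μ]
    {f : Ω → α} {g : Ω → β} (hfg : IndepFun f g μ) (hf : AEMeasurable f μ) (hg : Measurable g)
    {t : Set β} (ht : MeasurableSet t) (hμt : μ (g ⁻¹' t) ≠ 0) :
    IdentDistrib f f μ[|g ⁻¹' t] μ where
  aemeasurable_fst := hf.mono_ac cond_absolutelyContinuous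
  aemeasurable_snd := hf
  map_eq := by
    ext s hs
    rw [Measure.map_apply_of_aemeasurable (hf.mono_ac cond_absolutelyContinuous) hs,
      Measure.map_apply_of_aemeasurable hf hs, cond_apply (hg ht), Set.inter_comm,
      hfg.measure_inter_preimage_eq_mul _ _ hs ht, mul_comm,
      ENNReal.mul_inv_cancel_right hμt (measure_ne_top μ _)]

theorem integral_cond_eq_of_eqOn {E : Type*} [NormedAddCommGroup E] [NormedSpace ℝ E]
    {f g : Ω → E} {s : Set Ω} (hs : MeasurableSet s) (hfg : Set.EqOn f g s) :
    ∫ ω, f ω ∂μ[|s] = ∫ ω, g ω ∂μ[|s] :=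
  integral_congr_ae (ae_cond_of_forall_mem hs hfg)

end

theorem global_cate_identification_within_site_general
    {Ω : Type*} [MeasurableSpace Ω] (P : Measure Ω) [IsProbabilityMeasure P]
    (Y₀ Y₁ : Ω → ℝ) (hY₀ : Integrable Y₀ P) (hY₁ : Integrable Y₁ P)
    {K : Type*} [MeasurableSpace K] [MeasurableSingletonClass K]
    (S : Ω → K) (hS : Measurable S)
    (Z : Ω → ℝ) (hZ : Measurable Z)
    (Y : Ω → ℝ) (hY : ∀ ω, Y ω = Z ω * Y₁ ω + (1 - Z ω) * Y₀ ω)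
    (B : Set Ω) (hB : MeasurableSet B) (k : K)
    (hk1 : 0 < P (B ∩ {ω | S ω = k} ∩ {ω | Z ω = 1}))
    (hk0 : 0 < P (B ∩ {ω | S ω = k} ∩ {ω | Z ω = 0}))
    (hunconf : IndepFun (fun ω => (Y₀ ω, Y₁ ω)) Z (P[|B ∩ {ω | S ω = k}]))
    (htransport : IndepFun (fun ω => (Y₀ ω, Y₁ ω)) S (P[|B])) :
    (∫ ω, Y ω ∂(P[|B ∩ {ω | S ω = k} ∩ {ω | Z ω = 1}])) -
      (∫ ω, Y ω ∂(P[|B ∩ {ω | S ω = k} ∩ {ω | Z ω = 0}])) =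
      ∫ ω, (Y₁ ω - Y₀ ω) ∂(P[|B]) := by
  set A := B ∩ {ω | S ω = k}
  have hSk : MeasurableSet {ω | S ω = k} := hS (measurableSet_singleton k)
  have hA : MeasurableSet A := hB.inter hSk
  have hPA : P A ≠ 0 := (hk1.trans_le (measure_mono Set.inter_subset_left)).ne'
  have hpair : AEMeasurable (fun ω => (Y₀ ω, Y₁ ω)) P[|A] :=
    (hY₀.cond A).aemeasurable.prodMk (hY₁.cond A).aemeasurable
  have treated : ∫ ω, Y ω ∂P[|A ∩ {ω | Z ω = 1}] = ∫ ω, Y₁ ω ∂P[|A] := by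
    have hZ1 : MeasurableSet {ω | Z ω = 1} := hZ (measurableSet_singleton 1)
    rw [integral_cond_eq_of_eqOn (hA.inter hZ1) (g := Y₁)
      (fun ω hω => by rw [hY, show Z ω = 1 from hω.2]; ring), ← cond_cond_eq_cond_inter hA hZ1]
    exact ((hunconf.identDistrib_cond_preimage hpair hZ (measurableSet_singleton 1)
      (cond_pos_of_inter_ne_zero hA hk1.ne').ne').comp measurable_snd).integral_eq
  have control : ∫ ω, Y ω ∂P[|A ∩ {ω | Z ω = 0}] = ∫ ω, Y₀ ω ∂P[|A] := by
    have hZ0 : MeasurableSet {ω | Z ω = 0} := hZ (measurableSet_singleton 0)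
    rw [integral_cond_eq_of_eqOn (hA.inter hZ0) (g := Y₀)
      (fun ω hω => by rw [hY, show Z ω = 0 from hω.2]; ring), ← cond_cond_eq_cond_inter hA hZ0]
    exact ((hunconf.identDistrib_cond_preimage hpair hZ (measurableSet_singleton 0)
      (cond_pos_of_inter_ne_zero hA hk0.ne').ne').comp measurable_fst).integral_eq
  have transported : ∫ ω, (Y₁ ω - Y₀ ω) ∂P[|A] = ∫ ω, (Y₁ ω - Y₀ ω) ∂P[|B] := by
    rw [← cond_cond_eq_cond_inter hB hSk]
    exact ((htransport.identDistrib_cond_preimage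
      ((hY₀.cond B).aemeasurable.prodMk (hY₁.cond B).aemeasurable) hS
      (measurableSet_singleton k) (cond_pos_of_inter_ne_zero hB hPA).ne').comp
      (measurable_snd.sub measurable_fst)).integral_eq
  rw [treated, control, ← integral_sub (hY₁.cond A) (hY₀.cond A), transported]

/-- Identification of the global CATE at `x` from within-site observed data:
under within-site unconfoundedness `(Y₀,Y₁) ⊥ Z` given `B ∩ {S = k}` and
transportability `(Y₀,Y₁) ⊥ S` given `B` (with `B = {X = x}`), the observed
treated-vs-control contrast within site `k` equals `E[Y₁ − Y₀ | B]`. -/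
theorem global_cate_identification_within_site
    {Ω : Type*} [MeasurableSpace Ω] (P : Measure Ω) [IsProbabilityMeasure P]
    (Y₀ Y₁ : Ω → ℝ) (hY₀ : Integrable Y₀ P) (hY₁ : Integrable Y₁ P)
    {K : Type*} [Fintype K] [Nonempty K] [MeasurableSpace K] [MeasurableSingletonClass K]
    (S : Ω → K) (hS : Measurable S)
    (Z : Ω → ℝ) (hZ : Measurable Z) (hZ01 : ∀ ω, Z ω = 0 ∨ Z ω = 1)
    (Y : Ω → ℝ) (hY : ∀ ω, Y ω = Z ω * Y₁ ω + (1 - Z ω) * Y₀ ω)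
    (B : Set Ω) (hB : MeasurableSet B) (k : K)
    (hk1 : 0 < P (B ∩ {ω | S ω = k} ∩ {ω | Z ω = 1}))
    (hk0 : 0 < P (B ∩ {ω | S ω = k} ∩ {ω | Z ω = 0}))
    (hunconf : IndepFun (fun ω => (Y₀ ω, Y₁ ω)) Z (P[|B ∩ {ω | S ω = k}]))
    (htransport : IndepFun (fun ω => (Y₀ ω, Y₁ ω)) S (P[|B])) :
    (∫ ω, Y ω ∂(P[|B ∩ {ω | S ω = k} ∩ {ω | Z ω = 1}])) -
      (∫ ω, Y ω ∂(P[|B ∩ {ω | S ω = k} ∩ {ω | Z ω = 0}])) =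
      ∫ ω, (Y₁ ω - Y₀ ω) ∂(P[|B]) :=
  global_cate_identification_within_site_general P Y₀ Y₁ hY₀ hY₁ S hS Z hZ Y hY B hB k hk1 hk0
    hunconf htransport
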